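/- Let U, V, W be nonempty compact subsets of ℂ and p ∈ [1,∞]. For every A ∈ PE(U,V,W), ‖A‖_p = max_{B ∈ M(U,V,W)} ‖B‖_p =: M_p, the maximum being attained. If moreover (U,V,W) is compatible, then ‖A⁻¹‖_p = max_{B ∈ M(U,V,W)} ‖B⁻¹‖_p =: N_p, the maximum again being attained. -/

import Mathlib

open scoped ENNReal

noncomputable section

/-- The sequence space `ℓᵖ(ℤ)` (complex valued). -/
abbrev SeqZ (p : ℝ≥0∞) : Type := lp (fun _ : ℤ => ℂ) p
/-- The sequence space `ℓᵖ(ℕ)` (complex valued). -/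
abbrev SeqN (p : ℝ≥0∞) : Type := lp (fun _ : ℕ => ℂ) p

/-- The three diagonals take values in `U`, `V`, `W` respectively. -/
def RangesIn (U V W : Set ℂ) {ι : Type*} (u v w : ι → ℂ) : Prop :=
  (∀ i, u i ∈ U) ∧ (∀ i, v i ∈ V) ∧ (∀ i, w i ∈ W)

/-- `A` acts on `ℓᵖ(ℤ)` as the bi-infinite tridiagonal matrix with subdiagonal `u`
(entries `a_{i,i-1} = u i`), main diagonal `v` and superdiagonal `w` (`a_{i,i+1} = w i`). -/
def BiActs {p : ℝ≥0∞} [Fact (1 ≤ p)] (A : SeqZ p →L[ℂ] SeqZ p) (u v w : ℤ → ℂ) : Prop :=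
  ∀ (x : SeqZ p) (i : ℤ),
    (A x : ∀ _ : ℤ, ℂ) i =
      u i * (x : ∀ _ : ℤ, ℂ) (i - 1) + v i * (x : ∀ _ : ℤ, ℂ) i +
        w i * (x : ∀ _ : ℤ, ℂ) (i + 1)

/-- `A` acts on `ℓᵖ(ℕ)` as the semi-infinite tridiagonal matrix with subdiagonal `u`
(entries `a_{i,i-1} = u i` for `i ≥ 1`), main diagonal `v` and superdiagonal `w`. -/
def SemiActs {p : ℝ≥0∞} [Fact (1 ≤ p)] (A : SeqN p →L[ℂ] SeqN p) (u v w : ℕ → ℂ) : Prop :=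
  ∀ (x : SeqN p) (i : ℕ),
    (A x : ∀ _ : ℕ, ℂ) i =
      (if i = 0 then 0 else u i * (x : ∀ _ : ℕ, ℂ) (i - 1)) + v i * (x : ∀ _ : ℕ, ℂ) i +
        w i * (x : ∀ _ : ℕ, ℂ) (i + 1)

/-- membership in `M(U,V,W)`: bi-infinite tridiagonal operators over `(U,V,W)`. -/
def MemM (U V W : Set ℂ) {p : ℝ≥0∞} [Fact (1 ≤ p)] (A : SeqZ p →L[ℂ] SeqZ p) : Prop :=
  ∃ u v w : ℤ → ℂ, RangesIn U V W u v w ∧ BiActs A u v w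

/-- membership in `M₊(U,V,W)`: semi-infinite tridiagonal operators over `(U,V,W)`. -/
def MemMPlus (U V W : Set ℂ) {p : ℝ≥0∞} [Fact (1 ≤ p)] (A : SeqN p →L[ℂ] SeqN p) : Prop :=
  ∃ u v w : ℕ → ℂ, RangesIn U V W u v w ∧ SemiActs A u v w

/-- pseudoergodicity of bi-infinite diagonal data: every finite pattern of diagonals over
`(U,V,W)` is reproduced to arbitrary accuracy somewhere along the diagonals. -/
def PseudoergodicZ (U V W : Set ℂ) (u v w : ℤ → ℂ) : Prop :=
  ∀ (n : ℕ) (bu bv bw : Fin n → ℂ), RangesIn U V W bu bv bw →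
    ∀ ε : ℝ, 0 < ε → ∃ k : ℤ, ∀ i : Fin n,
      ‖u (k + (i : ℕ)) - bu i‖ < ε ∧ ‖v (k + (i : ℕ)) - bv i‖ < ε ∧
        ‖w (k + (i : ℕ)) - bw i‖ < ε

/-- pseudoergodicity of semi-infinite diagonal data. -/
def PseudoergodicN (U V W : Set ℂ) (u v w : ℕ → ℂ) : Prop :=
  ∀ (n : ℕ) (bu bv bw : Fin n → ℂ), RangesIn U V W bu bv bw →
    ∀ ε : ℝ, 0 < ε → ∃ k : ℕ, ∀ i : Fin n,
      ‖u (k + (i : ℕ)) - bu i‖ < ε ∧ ‖v (k + (i : ℕ)) - bv i‖ < ε ∧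
        ‖w (k + (i : ℕ)) - bw i‖ < ε

/-- membership in `PE(U,V,W)`: pseudoergodic bi-infinite operators. -/
def MemPE (U V W : Set ℂ) {p : ℝ≥0∞} [Fact (1 ≤ p)] (A : SeqZ p →L[ℂ] SeqZ p) : Prop :=
  ∃ u v w : ℤ → ℂ, RangesIn U V W u v w ∧ PseudoergodicZ U V W u v w ∧ BiActs A u v w

/-- membership in `PE₊(U,V,W)`: pseudoergodic semi-infinite operators. -/
def MemPEPlus (U V W : Set ℂ) {p : ℝ≥0∞} [Fact (1 ≤ p)] (A : SeqN p →L[ℂ] SeqN p) : Prop :=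
  ∃ u v w : ℕ → ℂ, RangesIn U V W u v w ∧ PseudoergodicN U V W u v w ∧ SemiActs A u v w

/-- `(U,V,W)` is compatible: every operator in `M(U,V,W)` is invertible on `ℓᵖ(ℤ)`
for every `p ∈ [1,∞]`. -/
def Compatible (U V W : Set ℂ) : Prop :=
  ∀ (p : ℝ≥0∞) [Fact (1 ≤ p)], ∀ A : SeqZ p →L[ℂ] SeqZ p, MemM U V W A → IsUnit A

/-- `α(A)`: the dimension of the kernel. -/
def alphaDim {E : Type*} [NormedAddCommGroup E] [NormedSpace ℂ E] (A : E →L[ℂ] E) : ℕ :=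
  Module.finrank ℂ (LinearMap.ker (A : E →ₗ[ℂ] E))

/-- `β(A)`: the codimension of the range. -/
def betaDim {E : Type*} [NormedAddCommGroup E] [NormedSpace ℂ E] (A : E →L[ℂ] E) : ℕ :=
  Module.finrank ℂ (E ⧸ LinearMap.range (A : E →ₗ[ℂ] E))

/-- `A` is a Fredholm operator: finite-dimensional kernel and finite-codimensional range. -/
def IsFredholmOp {E : Type*} [NormedAddCommGroup E] [NormedSpace ℂ E] (A : E →L[ℂ] E) : Prop :=
  FiniteDimensional ℂ (LinearMap.ker (A : E →ₗ[ℂ] E)) ∧ FiniteDimensional ℂ (E ⧸ LinearMap.range (A : E →ₗ[ℂ] E))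

/-- the Fredholm index `ind A = α(A) - β(A)`. -/
def fredIndex {E : Type*} [NormedAddCommGroup E] [NormedSpace ℂ E] (A : E →L[ℂ] E) : ℤ :=
  (alphaDim A : ℤ) - (betaDim A : ℤ)

/-- `(U,V,W)` is compatible and the common Fredholm index `κ(U,V,W)` of the semi-infinite
operators in `M₊(U,V,W)` equals `k`. -/
def KappaIs (U V W : Set ℂ) (k : ℤ) : Prop :=
  Compatible U V W ∧
    ∀ (p : ℝ≥0∞) [Fact (1 ≤ p)], ∀ B : SeqN p →L[ℂ] SeqN p, MemMPlus U V W B →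
      IsFredholmOp B ∧ fredIndex B = k

/-- union of the `ℓᵖ`-spectra of all operators in `M(U,V,W)`, at exponent `p`. -/
def specSetZAt (U V W : Set ℂ) (p : ℝ≥0∞) [Fact (1 ≤ p)] : Set ℂ :=
  {lam | ∃ C : SeqZ p →L[ℂ] SeqZ p, MemM U V W C ∧ lam ∈ spectrum ℂ C}

/-- union of the `ℓᵖ`-spectra of all operators in `M₊(U,V,W)`, at exponent `p`. -/
def specSetNAt (U V W : Set ℂ) (p : ℝ≥0∞) [Fact (1 ≤ p)] : Set ℂ :=
  {lam | ∃ C : SeqN p →L[ℂ] SeqN p, MemMPlus U V W C ∧ lam ∈ spectrum ℂ C}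

/-- `Σ(U,V,W)`: the union of the spectra of all operators in `M(U,V,W)`. -/
def SigmaSet (U V W : Set ℂ) : Set ℂ :=
  ⋃ (p : ℝ≥0∞), ⋃ (h : Fact (1 ≤ p)), @specSetZAt U V W p h

/-- `Σ₊(U,V,W)`: the union of the spectra of all operators in `M₊(U,V,W)`. -/
def SigmaPlusSet (U V W : Set ℂ) : Set ℂ :=
  ⋃ (p : ℝ≥0∞), ⋃ (h : Fact (1 ≤ p)), @specSetNAt U V W p h

/-- `V - λ`. -/
def shiftSet (V : Set ℂ) (lam : ℂ) : Set ℂ := (fun v => v - lam) '' V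

/-- `Σ_k(U,V,W) = {λ : (U, V-λ, W) compatible with κ(U, V-λ, W) = k}`. -/
def SigmaK (U V W : Set ℂ) (k : ℤ) : Set ℂ := {lam | KappaIs U (shiftSet V lam) W k}

/-- `Σ_{±1} = Σ_{-1} ∪ Σ_1`. -/
def SigmaPM (U V W : Set ℂ) : Set ℂ := SigmaK U V W (-1) ∪ SigmaK U V W 1

/-- the ellipse `E(u,v,w) = {u t + v + w/t : |t| = 1}`. -/
def ellipse (u v w : ℂ) : Set ℂ := (fun t : ℂ => u * t + v + w / t) '' {t : ℂ | ‖t‖ = 1}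

open Polynomial in
open Classical in
/-- winding number of the loop `t ↦ u t + v + w/t` (`t` on the unit circle, traversed
counter-clockwise) around `lam`, computed, via the argument principle, as the number of
roots (with multiplicity) of `u t² + (v - λ) t + w` in the open unit disk minus the order
of the pole at `0`.  (Valid whenever `lam` does not lie on the ellipse itself.) -/
def windingAt (u v w lam : ℂ) : ℤ :=
  (((C u * X ^ 2 + C (v - lam) * X + C w).roots.filter (fun z => ‖z‖ < 1)).card : ℤ) - 1

/-- `lam` lies inside the oriented ellipse `E(u,v,w)`: not on it, nonzero winding number. -/
def insideEllipse (u v w lam : ℂ) : Prop :=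
  lam ∉ ellipse u v w ∧ windingAt u v w lam ≠ 0

/-- `E_∩`: points inside all the ellipses `E(u,v,w)`, `(u,v,w) ∈ U × V × W`. -/
def Ecap (U V W : Set ℂ) : Set ℂ :=
  {lam | ∀ u ∈ U, ∀ v ∈ V, ∀ w ∈ W, insideEllipse u v w lam}

/-- `E₁`: points of `E_∩` circumnavigated clockwise (winding number `-1`) by all ellipses. -/
def Eone (U V W : Set ℂ) : Set ℂ :=
  {lam ∈ Ecap U V W | ∀ u ∈ U, ∀ v ∈ V, ∀ w ∈ W, windingAt u v w lam = -1}

/-- `E_{-1}`: points of `E_∩` circumnavigated counter-clockwise (winding number `1`). -/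
def EmOne (U V W : Set ℂ) : Set ℂ :=
  {lam ∈ Ecap U V W | ∀ u ∈ U, ∀ v ∈ V, ∀ w ∈ W, windingAt u v w lam = 1}

/-- `E_{±1} = E_{-1} ∪ E₁`. -/
def Epm (U V W : Set ℂ) : Set ℂ := EmOne U V W ∪ Eone U V W

/-- `E_∪`: the union of the filled ellipses. -/
def Ecup (U V W : Set ℂ) : Set ℂ :=
  ⋃ (u ∈ U) (v ∈ V) (w ∈ W), convexHull ℝ (ellipse u v w)

/-- `sup` of moduli over a set, e.g. `u^* = max_{u ∈ U} |u|`. -/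
def supAbs (S : Set ℂ) : ℝ := sSup ((fun z : ℂ => ‖z‖) '' S)

/-- `inf` of moduli over a set, e.g. `u_* = min_{u ∈ U} |u|`. -/
def infAbs (S : Set ℂ) : ℝ := sInf ((fun z : ℂ => ‖z‖) '' S)

/-- `M_p = sup_{B ∈ M(U,V,W)} ‖B‖_p`. -/
def Mnorm (U V W : Set ℂ) (p : ℝ≥0∞) [Fact (1 ≤ p)] : ℝ :=
  sSup {x : ℝ | ∃ B : SeqZ p →L[ℂ] SeqZ p, MemM U V W B ∧ x = ‖B‖}

/-- `N_p = sup_{B ∈ M(U,V,W)} ‖B⁻¹‖_p`. -/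
def Nnorm (U V W : Set ℂ) (p : ℝ≥0∞) [Fact (1 ≤ p)] : ℝ :=
  sSup {x : ℝ | ∃ B : SeqZ p →L[ℂ] SeqZ p, MemM U V W B ∧ x = ‖Ring.inverse B‖}

/-- `M_{+,p} = sup_{B₊ ∈ M₊(U,V,W)} ‖B₊‖_p`. -/
def MnormPlus (U V W : Set ℂ) (p : ℝ≥0∞) [Fact (1 ≤ p)] : ℝ :=
  sSup {x : ℝ | ∃ B : SeqN p →L[ℂ] SeqN p, MemMPlus U V W B ∧ x = ‖B‖}

/-- `N_{+,p} = sup_{B₊ ∈ M₊(U,V,W)} ‖B₊⁻¹‖_p`. -/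
def NnormPlus (U V W : Set ℂ) (p : ℝ≥0∞) [Fact (1 ≤ p)] : ℝ :=
  sSup {x : ℝ | ∃ B : SeqN p →L[ℂ] SeqN p, MemMPlus U V W B ∧ x = ‖Ring.inverse B‖}

/-- `p` is favourable for `(U,V,W)`: `‖A₊⁻¹‖_p = N_{+,p} = N_p` for all `A₊ ∈ PE₊(U,V,W)`. -/
def Favourable (U V W : Set ℂ) (p : ℝ≥0∞) [Fact (1 ≤ p)] : Prop :=
  ∀ A : SeqN p →L[ℂ] SeqN p, MemPEPlus U V W A →
    ‖Ring.inverse A‖ = NnormPlus U V W p ∧ NnormPlus U V W p = Nnorm U V W p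

/-- the `n × n` tridiagonal matrix with diagonals `u` (sub), `v` (main), `w` (super). -/
def JacobiMatrix {n : ℕ} (u v w : Fin n → ℂ) : Matrix (Fin n) (Fin n) ℂ :=
  fun i j =>
    if ((i : ℕ) : ℤ) = ((j : ℕ) : ℤ) + 1 then u i
    else if i = j then v i
    else if ((j : ℕ) : ℤ) = ((i : ℕ) : ℤ) + 1 then w i
    else 0

/-- the `ℓᵖ` norm of a finite complex vector. -/
def pVecNorm (p : ℝ≥0∞) [Fact (1 ≤ p)] {n : ℕ} (x : Fin n → ℂ) : ℝ :=
  ‖(WithLp.equiv p (Fin n → ℂ)).symm x‖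

/-- the operator norm of an `n × n` matrix acting on `(ℂⁿ, ‖·‖_p)`. -/
def matOpNorm (p : ℝ≥0∞) [Fact (1 ≤ p)] {n : ℕ} (F : Matrix (Fin n) (Fin n) ℂ) : ℝ :=
  sInf {c : ℝ | 0 ≤ c ∧ ∀ x : Fin n → ℂ, pVecNorm p (F.mulVec x) ≤ c * pVecNorm p x}

/-- the `p`-operator norm of the inverse matrix. -/
def matInvNorm (p : ℝ≥0∞) [Fact (1 ≤ p)] {n : ℕ} (F : Matrix (Fin n) (Fin n) ℂ) : ℝ :=
  matOpNorm p F⁻¹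

/-- `M_{n,p}`: sup of the `p`-norms of the `n × n` tridiagonal matrices over `(U,V,W)`. -/
def MnormFinN (U V W : Set ℂ) (p : ℝ≥0∞) [Fact (1 ≤ p)] (n : ℕ) : ℝ :=
  sSup {x : ℝ | ∃ u v w : Fin n → ℂ, RangesIn U V W u v w ∧
    x = matOpNorm p (JacobiMatrix u v w)}

/-- `M_{fin,p}`: sup of the `p`-norms of all finite tridiagonal matrices over `(U,V,W)`. -/
def MnormFin (U V W : Set ℂ) (p : ℝ≥0∞) [Fact (1 ≤ p)] : ℝ :=
  sSup {x : ℝ | ∃ (n : ℕ) (u v w : Fin n → ℂ), RangesIn U V W u v w ∧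
    x = matOpNorm p (JacobiMatrix u v w)}

/-- `N_{fin,p}`: sup of the `p`-norms of the inverses of all finite tridiagonal matrices. -/
def NnormFin (U V W : Set ℂ) (p : ℝ≥0∞) [Fact (1 ≤ p)] : ℝ :=
  sSup {x : ℝ | ∃ (n : ℕ) (u v w : Fin n → ℂ), RangesIn U V W u v w ∧
    x = matInvNorm p (JacobiMatrix u v w)}

/-- entry `(i,j)` of the bi-infinite tridiagonal matrix with diagonals `u`, `v`, `w`. -/
def secEntryZ (u v w : ℤ → ℂ) (i j : ℤ) : ℂ :=
  if i = j + 1 then u i else if i = j then v i else if j = i + 1 then w i else 0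

/-- the finite section `(a_{ij})_{i,j=l}^{r}` of the bi-infinite tridiagonal matrix. -/
def finSecZ (u v w : ℤ → ℂ) (l r : ℤ) :
    Matrix (Fin (r + 1 - l).toNat) (Fin (r + 1 - l).toNat) ℂ :=
  fun i j => secEntryZ u v w (l + (i : ℕ)) (l + (j : ℕ))

/-- entry `(i,j)` of the semi-infinite tridiagonal matrix with diagonals `u`, `v`, `w`. -/
def secEntryN (u v w : ℕ → ℂ) (i j : ℕ) : ℂ :=
  if i = j + 1 then u i else if i = j then v i else if j = i + 1 then w i else 0

/-- the `n`-th finite section (first `n` rows and columns) of the semi-infinite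
tridiagonal matrix with diagonals `u`, `v`, `w`. -/
def finSecN (u v w : ℕ → ℂ) (n : ℕ) : Matrix (Fin n) (Fin n) ℂ :=
  fun i j => secEntryN u v w i j

/-- stability of the sequence of finite sections of a bi-infinite tridiagonal matrix with
cut-off sequences `l`, `r`: eventually invertible with uniformly bounded inverses. -/
def StableSecsZ (p : ℝ≥0∞) [Fact (1 ≤ p)] (u v w : ℤ → ℂ) (l r : ℕ → ℤ) : Prop :=
  ∃ (n₀ : ℕ) (c : ℝ), ∀ n, n₀ ≤ n →
    IsUnit (finSecZ u v w (l n) (r n)) ∧ matInvNorm p (finSecZ u v w (l n) (r n)) ≤ c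

/-- stability of the sequence of finite sections of a semi-infinite tridiagonal matrix. -/
def StableSecsN (p : ℝ≥0∞) [Fact (1 ≤ p)] (u v w : ℕ → ℂ) (r : ℕ → ℕ) : Prop :=
  ∃ (n₀ : ℕ) (c : ℝ), ∀ n, n₀ ≤ n →
    IsUnit (finSecN u v w (r n)) ∧ matInvNorm p (finSecN u v w (r n)) ≤ c

/-- the full finite section method applies to every operator in `M(U,V,W)`:
the operator is invertible and the finite sections `(a_{ij})_{i,j=-n}^{n}` are stable. -/
def FullFSMAppliesZ (U V W : Set ℂ) : Prop :=
  ∀ (p : ℝ≥0∞) [Fact (1 ≤ p)], ∀ u v w : ℤ → ℂ, RangesIn U V W u v w →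
    ∀ A : SeqZ p →L[ℂ] SeqZ p, BiActs A u v w →
      IsUnit A ∧ StableSecsZ p u v w (fun n => -(n : ℤ)) (fun n => (n : ℤ))

/-- the full finite section method applies to every operator in `M₊(U,V,W)`:
the operator is invertible and the finite sections `(a_{ij})_{i,j=1}^{n}` are stable. -/
def FullFSMAppliesN (U V W : Set ℂ) : Prop :=
  ∀ (p : ℝ≥0∞) [Fact (1 ≤ p)], ∀ u v w : ℕ → ℂ, RangesIn U V W u v w →
    ∀ A : SeqN p →L[ℂ] SeqN p, SemiActs A u v w →
      IsUnit A ∧ StableSecsN p u v w (fun n => n)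

/-- one operator in `PE₊(U,V,W)` is invertible (on some, equivalently each, `ℓᵖ(ℕ)`). -/
def PEPlusInvAt (U V W : Set ℂ) (p : ℝ≥0∞) [Fact (1 ≤ p)] : Prop :=
  ∃ B : SeqN p →L[ℂ] SeqN p, MemPEPlus U V W B ∧ IsUnit B

def ExistsInvPEPlus (U V W : Set ℂ) : Prop :=
  ∃ (p : ℝ≥0∞) (h : Fact (1 ≤ p)), @PEPlusInvAt U V W p h

/-- one operator in `PE₊(U,V,W)` is Fredholm of index `0`. -/
def PEPlusFred0At (U V W : Set ℂ) (p : ℝ≥0∞) [Fact (1 ≤ p)] : Prop :=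
  ∃ B : SeqN p →L[ℂ] SeqN p, MemPEPlus U V W B ∧ IsFredholmOp B ∧ fredIndex B = 0

def ExistsFred0PEPlus (U V W : Set ℂ) : Prop :=
  ∃ (p : ℝ≥0∞) (h : Fact (1 ≤ p)), @PEPlusFred0At U V W p h

/-- all operators in `M₊(U,V,W)` are invertible (on every `ℓᵖ(ℕ)`). -/
def AllMPlusInv (U V W : Set ℂ) : Prop :=
  ∀ (p : ℝ≥0∞) [Fact (1 ≤ p)], ∀ B : SeqN p →L[ℂ] SeqN p, MemMPlus U V W B → IsUnit B

/-- the `ε`-pseudospectrum of a bounded operator (the spectrum together with the points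
where the resolvent has norm `> 1/ε`). -/
def pspec {E : Type*} [NormedAddCommGroup E] [NormedSpace ℂ E] (ε : ℝ)
    (A : E →L[ℂ] E) : Set ℂ :=
  {lam | ¬IsUnit (A - lam • (1 : E →L[ℂ] E)) ∨
    1 / ε < ‖Ring.inverse (A - lam • (1 : E →L[ℂ] E))‖}

/-- the `ε`-pseudospectrum of an `n × n` matrix, in the `p`-operator norm. -/
def pspecMat (p : ℝ≥0∞) [Fact (1 ≤ p)] {n : ℕ} (ε : ℝ) (F : Matrix (Fin n) (Fin n) ℂ) :
    Set ℂ :=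
  {lam | ¬IsUnit (F - lam • (1 : Matrix (Fin n) (Fin n) ℂ)) ∨
    1 / ε < matInvNorm p (F - lam • (1 : Matrix (Fin n) (Fin n) ℂ))}

/-- `Σ_ε^p`: union of the `ε`-pseudospectra of all operators in `M(U,V,W)`. -/
def SigmaEps (U V W : Set ℂ) (p : ℝ≥0∞) [Fact (1 ≤ p)] (ε : ℝ) : Set ℂ :=
  {lam | ∃ B : SeqZ p →L[ℂ] SeqZ p, MemM U V W B ∧ lam ∈ pspec ε B}

/-- `Σ_{+,ε}^p`: union of the `ε`-pseudospectra of all operators in `M₊(U,V,W)`. -/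
def SigmaPlusEps (U V W : Set ℂ) (p : ℝ≥0∞) [Fact (1 ≤ p)] (ε : ℝ) : Set ℂ :=
  {lam | ∃ B : SeqN p →L[ℂ] SeqN p, MemMPlus U V W B ∧ lam ∈ pspec ε B}

/-- `p` is favourable for all the (compatible, index zero) shifted triples `(U, V-λ, W)`. -/
def FavAll (U V W : Set ℂ) (p : ℝ≥0∞) [Fact (1 ≤ p)] : Prop :=
  ∀ lam : ℂ, KappaIs U (shiftSet V lam) W 0 → Favourable U (shiftSet V lam) W p

end

/-!
Pseudoergodicity says that every finite piece of the diagonals of any `B ∈ M(U,V,W)` reappears,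
up to any `ε`, somewhere along the diagonals of `A`. Hence for finitely supported `x` a suitable
shift `y` of `x` has `‖A y‖ ≈ ‖B x‖`, which gives `‖B x‖ ≤ ‖A‖ ‖x‖` and
`‖x‖ ≤ ‖A⁻¹‖ ‖B x‖`. For `p < ∞` finitely supported vectors are dense. For `p = ∞` the first
bound is local, since a row of `B` sees only three entries of `x`; for the second, `x` is cut off
by ever wider tents, which vary so slowly that they almost commute with `B`.
-/

section lpReindex

variable {α β E : Type*} [NormedAddCommGroup E] {p : ℝ≥0∞}

theorem Memℓp.comp_equiv {f : β → E} (hf : Memℓp f p) (e : α ≃ β) : Memℓp (f ∘ e) p := by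
  rcases p.trichotomy with rfl | rfl | hp
  · exact memℓp_zero (hf.finite_dsupport.preimage e.injective.injOn)
  · exact memℓp_infty (hf.bddAbove.mono (by rintro _ ⟨i, rfl⟩; exact ⟨e i, rfl⟩))
  · exact memℓp_gen (e.summable_iff.2 (hf.summable hp))

def lp.compEquiv (e : α ≃ β) (f : lp (fun _ : β => E) p) : lp (fun _ : α => E) p :=
  ⟨f ∘ e, (lp.memℓp f).comp_equiv e⟩

@[simp]
theorem lp.compEquiv_apply (e : α ≃ β) (f : lp (fun _ : β => E) p) (i : α) :
    lp.compEquiv e f i = f (e i) :=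
  rfl

theorem lp.norm_compEquiv (e : α ≃ β) (f : lp (fun _ : β => E) p) :
    ‖lp.compEquiv e f‖ = ‖f‖ := by
  rcases p.trichotomy with rfl | rfl | hp
  · simp only [lp.norm_eq_card_dsupport, ← Set.ncard_eq_toFinset_card]
    exact congrArg Nat.cast <| Set.ncard_preimage_of_injective_subset_range
      (s := {j | f j ≠ 0}) e.injective (by simp)
  · simp only [lp.norm_eq_ciSup, lp.compEquiv_apply]
    exact e.iSup_comp (g := fun j => ‖f j‖)
  · simp only [lp.norm_eq_tsum_rpow hp, lp.compEquiv_apply]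
    rw [e.tsum_eq (fun j => ‖f j‖ ^ p.toReal)]

end lpReindex

section lpFiniteSupport

variable {α : Type*} {E : α → Type*} [∀ i, NormedAddCommGroup (E i)] {p : ℝ≥0∞}

theorem lp.coeFn_sum_single [DecidableEq α] (s : Finset α) (f : ∀ i, E i) (k : α) :
    (∑ i ∈ s, lp.single p i (f i)) k = if k ∈ s then f k else 0 := by
  simp only [lp.coeFn_sum, Finset.sum_apply, lp.coeFn_single, Finset.sum_pi_single]

theorem lp.norm_le_sum_norm_of_forall_notMem [Fact (1 ≤ p)] {f : lp E p} {s : Finset α}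
    (hf : ∀ i ∉ s, f i = 0) : ‖f‖ ≤ ∑ i ∈ s, ‖f i‖ := by
  classical
  have hsum : ∑ i ∈ s, lp.single p i (f i) = f := by
    ext k
    rw [lp.coeFn_sum_single]
    split_ifs with hk
    · rfl
    · exact (hf k hk).symm
  calc ‖f‖ = ‖∑ i ∈ s, lp.single p i (f i)‖ := by rw [hsum]
    _ ≤ ∑ i ∈ s, ‖lp.single p i (f i)‖ := norm_sum_le _ _
    _ = ∑ i ∈ s, ‖f i‖ := by simp only [lp.norm_single (zero_lt_one.trans_le Fact.out)]

theorem lp.norm_sum_single_le [DecidableEq α] (f : lp E ∞) (s : Finset α) :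
    ‖∑ i ∈ s, lp.single ∞ i (f i)‖ ≤ ‖f‖ := by
  refine lp.norm_le_of_forall_le (norm_nonneg f) fun k => ?_
  rw [lp.coeFn_sum_single]
  split_ifs
  · exact lp.norm_apply_le_norm ENNReal.top_ne_zero f k
  · simp

theorem lp.mem_of_isClosed_of_forall_finite_support [Fact (1 ≤ p)] (hp : p ≠ ∞) {S : Set (lp E p)}
    (hS : IsClosed S) (h : ∀ (s : Finset α) (f : lp E p), (∀ i ∉ s, f i = 0) → f ∈ S)
    (f : lp E p) : f ∈ S := by
  classical
  exact hS.mem_of_tendsto (lp.hasSum_single hp f) <| Filter.Eventually.of_forall fun s =>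
    h s _ fun i hi => by rw [lp.coeFn_sum_single, if_neg hi]

end lpFiniteSupport

section Inverse

variable {𝕜 E : Type*} [NontriviallyNormedField 𝕜] [NormedAddCommGroup E] [NormedSpace 𝕜 E]

theorem ContinuousLinearMap.norm_le_norm_ringInverse_mul {A : E →L[𝕜] E} (hA : IsUnit A) (y : E) :
    ‖y‖ ≤ ‖Ring.inverse A‖ * ‖A y‖ := by
  have hy : Ring.inverse A (A y) = y := by
    simpa using congrArg (fun T : E →L[𝕜] E => T y) (Ring.inverse_mul_cancel A hA)
  simpa only [hy] using (Ring.inverse A).le_opNorm (A y)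

theorem ContinuousLinearMap.norm_ringInverse_le_of_forall {B : E →L[𝕜] E} (hB : IsUnit B) {K : ℝ}
    (hK : 0 ≤ K) (h : ∀ x, ‖x‖ ≤ K * ‖B x‖) : ‖Ring.inverse B‖ ≤ K := by
  refine (Ring.inverse B).opNorm_le_bound hK fun y => ?_
  have hy : B (Ring.inverse B y) = y := by
    simpa using congrArg (fun T : E →L[𝕜] E => T y) (Ring.mul_inverse_cancel B hB)
  simpa only [hy] using h (Ring.inverse B y)

end Inverse

theorem le_of_forall_nat_mul_le_mul_add {a b c : ℝ} (h : ∀ m : ℕ, m * a ≤ m * b + c) : a ≤ b := by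
  by_contra! hab
  obtain ⟨m, hm⟩ := exists_nat_gt (c / (a - b))
  rw [div_lt_iff₀ (sub_pos.2 hab)] at hm
  nlinarith [h m]

-- truncated subtraction: the tent is `max 0 (m - |j - i₀|)`
def tent (i₀ : ℤ) (m : ℕ) (j : ℤ) : ℕ := m - (j - i₀).natAbs

theorem tent_le (i₀ : ℤ) (m : ℕ) (j : ℤ) : tent i₀ m j ≤ m := Nat.sub_le _ _

theorem tent_self (i₀ : ℤ) (m : ℕ) : tent i₀ m i₀ = m := by simp [tent]

theorem tent_eq_zero {i₀ : ℤ} {m : ℕ} {j : ℤ} (hj : j ∉ Finset.Icc (i₀ - m) (i₀ + m)) :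
    tent i₀ m j = 0 := by
  rw [Finset.mem_Icc] at hj
  unfold tent
  omega

theorem abs_tent_sub_tent_le {i₀ : ℤ} {m : ℕ} {j k : ℤ} (hjk : |j - k| ≤ 1) :
    |(tent i₀ m j : ℤ) - tent i₀ m k| ≤ 1 := by
  rw [abs_le] at hjk ⊢
  unfold tent
  omega

section Tridiagonal

variable {p : ℝ≥0∞}

noncomputable def tentCutoff (i₀ : ℤ) (m : ℕ) (x : SeqZ p) : SeqZ p :=
  ∑ j ∈ Finset.Icc (i₀ - m) (i₀ + m), lp.single p j ((tent i₀ m j : ℂ) * x j)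

theorem tentCutoff_apply (i₀ : ℤ) (m : ℕ) (x : SeqZ p) (j : ℤ) :
    tentCutoff i₀ m x j = tent i₀ m j * x j := by
  rw [tentCutoff, lp.coeFn_sum_single]
  split_ifs with hj
  · rfl
  · simp [tent_eq_zero hj]

theorem tentCutoff_apply_of_notMem {i₀ : ℤ} {m : ℕ} (x : SeqZ p) {j : ℤ}
    (hj : j ∉ Finset.Icc (i₀ - m) (i₀ + m)) : tentCutoff i₀ m x j = 0 := by
  simp [tentCutoff_apply, tent_eq_zero hj]

variable [Fact (1 ≤ p)]

namespace BiActs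

variable {B : SeqZ p →L[ℂ] SeqZ p} {u v w : ℤ → ℂ}

theorem apply_single (hB : BiActs B u v w) (i j : ℤ) :
    B (lp.single (E := fun _ : ℤ => ℂ) p j 1) i = secEntryZ u v w i j := by
  rw [hB]
  simp only [secEntryZ, lp.coeFn_single, Pi.single_apply]
  split_ifs <;> first | omega | simp

theorem norm_secEntryZ_le (hB : BiActs B u v w) (i j : ℤ) : ‖secEntryZ u v w i j‖ ≤ ‖B‖ := by
  have hp : 0 < p := zero_lt_one.trans_le Fact.out
  set e : SeqZ p := lp.single (E := fun _ : ℤ => ℂ) p j 1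
  have he : ‖e‖ = 1 := by rw [lp.norm_single hp, norm_one]
  calc ‖secEntryZ u v w i j‖ = ‖B e i‖ := by rw [hB.apply_single]
    _ ≤ ‖B e‖ := lp.norm_apply_le_norm hp.ne' _ _
    _ ≤ ‖B‖ * ‖e‖ := B.le_opNorm e
    _ = ‖B‖ := by rw [he, mul_one]

theorem norm_subdiag_le (hB : BiActs B u v w) (i : ℤ) : ‖u i‖ ≤ ‖B‖ := by
  simpa [secEntryZ] using hB.norm_secEntryZ_le i (i - 1)

theorem norm_superdiag_le (hB : BiActs B u v w) (i : ℤ) : ‖w i‖ ≤ ‖B‖ := by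
  simpa [secEntryZ, show i ≠ i + 1 + 1 by omega] using hB.norm_secEntryZ_le i (i + 1)

theorem norm_apply_tentCutoff_le {B : SeqZ ∞ →L[ℂ] SeqZ ∞} (hB : BiActs B u v w) (i₀ : ℤ)
    (m : ℕ) (x : SeqZ ∞) : ‖B (tentCutoff i₀ m x)‖ ≤ m * ‖B x‖ + 2 * ‖B‖ * ‖x‖ := by
  refine lp.norm_le_of_forall_le (by positivity) fun k => ?_
  set τ : ℤ → ℂ := fun j => (tent i₀ m j : ℂ)
  have hslope : ∀ j, |j - k| ≤ 1 → ‖τ j - τ k‖ ≤ 1 := fun j hj => by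
    have hcast : τ j - τ k = (((tent i₀ m j : ℤ) - tent i₀ m k : ℤ) : ℂ) := by push_cast; rfl
    rw [hcast, Complex.norm_intCast]
    exact_mod_cast abs_tent_sub_tent_le hj
  have hτ : ‖τ k‖ ≤ m := by simpa [τ] using tent_le i₀ m k
  have hcomm : B (tentCutoff i₀ m x) k = τ k * B x k + u k * (τ (k - 1) - τ k) * x (k - 1)
      + w k * (τ (k + 1) - τ k) * x (k + 1) := by
    rw [hB, hB]
    simp only [tentCutoff_apply, τ]
    ring
  calc ‖B (tentCutoff i₀ m x) k‖
      ≤ ‖τ k * B x k‖ + ‖u k * (τ (k - 1) - τ k) * x (k - 1)‖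
        + ‖w k * (τ (k + 1) - τ k) * x (k + 1)‖ := hcomm ▸ norm_add₃_le
    _ ≤ m * ‖B x‖ + ‖B‖ * 1 * ‖x‖ + ‖B‖ * 1 * ‖x‖ := by
      simp only [norm_mul]
      gcongr
      · exact lp.norm_apply_le_norm ENNReal.top_ne_zero _ _
      · exact hB.norm_subdiag_le k
      · exact hslope _ (by rw [abs_le]; omega)
      · exact lp.norm_apply_le_norm ENNReal.top_ne_zero _ _
      · exact hB.norm_superdiag_le k
      · exact hslope _ (by rw [abs_le]; omega)
      · exact lp.norm_apply_le_norm ENNReal.top_ne_zero _ _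
    _ = m * ‖B x‖ + 2 * ‖B‖ * ‖x‖ := by ring

theorem opNorm_le_of_forall_finite_support (hB : BiActs B u v w) {C : ℝ} (hC : 0 ≤ C)
    (h : ∀ (s : Finset ℤ) (x : SeqZ p), (∀ j ∉ s, x j = 0) → ‖B x‖ ≤ C * ‖x‖) : ‖B‖ ≤ C := by
  refine B.opNorm_le_bound hC fun x => ?_
  rcases eq_or_ne p ∞ with rfl | hp
  · refine lp.norm_le_of_forall_le (by positivity) fun i => ?_
    set x' : SeqZ ∞ := ∑ j ∈ Finset.Icc (i - 1) (i + 1), lp.single ∞ j (x j)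
    have hBi : B x i = B x' i := by
      rw [hB, hB]
      simp only [x', lp.coeFn_sum_single, Finset.mem_Icc]
      split_ifs <;> first | rfl | omega
    calc ‖B x i‖ = ‖B x' i‖ := by rw [hBi]
      _ ≤ ‖B x'‖ := lp.norm_apply_le_norm ENNReal.top_ne_zero _ _
      _ ≤ C * ‖x'‖ := h (Finset.Icc (i - 1) (i + 1)) x' fun j hj => by
        simp only [x', lp.coeFn_sum_single, if_neg hj]
      _ ≤ C * ‖x‖ := by gcongr; exact lp.norm_sum_single_le x _
  · exact lp.mem_of_isClosed_of_forall_finite_support (S := {x | ‖B x‖ ≤ C * ‖x‖}) hp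
      (isClosed_le (by fun_prop) (by fun_prop)) h x

theorem norm_le_mul_norm_apply_of_forall_finite_support (hB : BiActs B u v w) {K : ℝ}
    (hK : 0 ≤ K) (h : ∀ (s : Finset ℤ) (x : SeqZ p), (∀ j ∉ s, x j = 0) → ‖x‖ ≤ K * ‖B x‖)
    (x : SeqZ p) : ‖x‖ ≤ K * ‖B x‖ := by
  rcases eq_or_ne p ∞ with rfl | hp
  · refine lp.norm_le_of_forall_le (by positivity) fun i₀ =>
      le_of_forall_nat_mul_le_mul_add (c := K * (2 * ‖B‖ * ‖x‖)) fun m => ?_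
    calc m * ‖x i₀‖ = ‖tentCutoff i₀ m x i₀‖ := by simp [tentCutoff_apply, tent_self]
      _ ≤ ‖tentCutoff i₀ m x‖ := lp.norm_apply_le_norm ENNReal.top_ne_zero _ _
      _ ≤ K * ‖B (tentCutoff i₀ m x)‖ := h _ _ fun j hj => tentCutoff_apply_of_notMem x hj
      _ ≤ K * (m * ‖B x‖ + 2 * ‖B‖ * ‖x‖) := by gcongr; exact hB.norm_apply_tentCutoff_le i₀ m x
      _ = m * (K * ‖B x‖) + K * (2 * ‖B‖ * ‖x‖) := by ring
  · exact lp.mem_of_isClosed_of_forall_finite_support (S := {x | ‖x‖ ≤ K * ‖B x‖}) hp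
      (isClosed_le (by fun_prop) (by fun_prop)) h x

end BiActs

end Tridiagonal

namespace PseudoergodicZ

variable {U V W : Set ℂ} {u v w bu bv bw : ℤ → ℂ}

theorem exists_shift_near (hPE : PseudoergodicZ U V W u v w) (hb : RangesIn U V W bu bv bw)
    (l r : ℤ) {δ : ℝ} (hδ : 0 < δ) : ∃ t : ℤ, ∀ j ∈ Finset.Icc l r,
      ‖u (j + t) - bu j‖ < δ ∧ ‖v (j + t) - bv j‖ < δ ∧ ‖w (j + t) - bw j‖ < δ := by
  obtain ⟨k, hk⟩ := hPE (r + 1 - l).toNat (fun i => bu (l + (i : ℕ)))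
    (fun i => bv (l + (i : ℕ))) (fun i => bw (l + (i : ℕ)))
    ⟨fun _ => hb.1 _, fun _ => hb.2.1 _, fun _ => hb.2.2 _⟩ δ hδ
  refine ⟨k - l, fun j hj => ?_⟩
  rw [Finset.mem_Icc] at hj
  have hk' := hk ⟨(j - l).toNat, by omega⟩
  have e₁ : k + ((j - l).toNat : ℤ) = j + (k - l) := by omega
  have e₂ : l + ((j - l).toNat : ℤ) = j := by omega
  simpa only [e₁, e₂] using hk'

variable {p : ℝ≥0∞} [Fact (1 ≤ p)] {A B : SeqZ p →L[ℂ] SeqZ p}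

theorem exists_norm_eq_abs_norm_apply_sub_lt (hPE : PseudoergodicZ U V W u v w)
    (hA : BiActs A u v w) (hb : RangesIn U V W bu bv bw) (hB : BiActs B bu bv bw)
    {s : Finset ℤ} {x : SeqZ p} (hx : ∀ j ∉ s, x j = 0) {ε : ℝ} (hε : 0 < ε) :
    ∃ y : SeqZ p, ‖y‖ = ‖x‖ ∧ |‖A y‖ - ‖B x‖| < ε := by
  have hp : p ≠ 0 := (zero_lt_one.trans_le Fact.out).ne'
  obtain ⟨l, hl⟩ := s.bddBelow
  obtain ⟨r, hr⟩ := s.bddAbove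
  have hx' : ∀ j, j < l ∨ r < j → x j = 0 := fun j hj =>
    hx j fun hjs => by have := hl hjs; have := hr hjs; omega
  set S := Finset.Icc (l - 1) (r + 1)
  obtain ⟨δ, hδ, hδε⟩ := exists_pos_mul_lt hε (S.card * (3 * ‖x‖))
  obtain ⟨t, ht⟩ := hPE.exists_shift_near hb (l - 1) (r + 1) hδ
  -- `y` is `x` moved to the place where the diagonals of `A` imitate those of `B` on `S`
  set y := lp.compEquiv (Equiv.subRight t) x
  set z := lp.compEquiv (Equiv.subRight t) (B x)
  have hd : ∀ i, (A y - z) i = (u i - bu (i - t)) * x (i - t - 1) + (v i - bv (i - t)) * x (i - t)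
      + (w i - bw (i - t)) * x (i - t + 1) := fun i => by
    simp only [lp.coeFn_sub, Pi.sub_apply, y, z, lp.compEquiv_apply, Equiv.subRight_apply]
    rw [hA, hB]
    simp only [lp.compEquiv_apply, Equiv.subRight_apply, sub_right_comm i 1 t,
      add_sub_right_comm i 1 t]
    ring
  have hd_zero : ∀ i ∉ S.map (addRightEmbedding t), (A y - z) i = 0 := fun i hi => by
    rw [Finset.map_add_right_Icc, Finset.mem_Icc] at hi
    rw [hd, hx' (i - t - 1) (by omega), hx' (i - t) (by omega), hx' (i - t + 1) (by omega)]
    ring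
  have hd_le : ∀ i ∈ S.map (addRightEmbedding t), ‖(A y - z) i‖ ≤ 3 * ‖x‖ * δ := fun i hi => by
    rw [Finset.map_add_right_Icc] at hi
    obtain ⟨hu, hv, hw⟩ := ht (i - t) (by rw [Finset.mem_Icc] at hi ⊢; omega)
    rw [sub_add_cancel] at hu hv hw
    rw [hd]
    calc _ ≤ ‖(u i - bu (i - t)) * x (i - t - 1)‖ + ‖(v i - bv (i - t)) * x (i - t)‖
          + ‖(w i - bw (i - t)) * x (i - t + 1)‖ := norm_add₃_le
      _ ≤ δ * ‖x‖ + δ * ‖x‖ + δ * ‖x‖ := by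
        simp only [norm_mul]
        gcongr <;> exact lp.norm_apply_le_norm hp _ _
      _ = 3 * ‖x‖ * δ := by ring
  refine ⟨y, lp.norm_compEquiv _ _, ?_⟩
  calc |‖A y‖ - ‖B x‖| = |‖A y‖ - ‖z‖| := by rw [lp.norm_compEquiv]
    _ ≤ ‖A y - z‖ := abs_norm_sub_norm_le _ _
    _ ≤ ∑ i ∈ S.map (addRightEmbedding t), ‖(A y - z) i‖ :=
      lp.norm_le_sum_norm_of_forall_notMem hd_zero
    _ ≤ (S.map (addRightEmbedding t)).card • (3 * ‖x‖ * δ) := Finset.sum_le_card_nsmul _ _ _ hd_le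
    _ = S.card * (3 * ‖x‖) * δ := by rw [Finset.card_map, nsmul_eq_mul]; ring
    _ < ε := hδε

end PseudoergodicZ

namespace BiActs

variable {U V W : Set ℂ} {u v w bu bv bw : ℤ → ℂ} {p : ℝ≥0∞} [Fact (1 ≤ p)]
  {A B : SeqZ p →L[ℂ] SeqZ p}

theorem norm_le_of_pseudoergodicZ (hB : BiActs B bu bv bw) (hb : RangesIn U V W bu bv bw)
    (hA : BiActs A u v w) (hPE : PseudoergodicZ U V W u v w) : ‖B‖ ≤ ‖A‖ := by
  refine hB.opNorm_le_of_forall_finite_support (norm_nonneg A) fun s x hx =>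
    le_of_forall_pos_lt_add fun ε hε => ?_
  obtain ⟨y, hy, hxy⟩ := hPE.exists_norm_eq_abs_norm_apply_sub_lt hA hb hB hx hε
  calc ‖B x‖ < ‖A y‖ + ε := by linarith [(abs_sub_lt_iff.1 hxy).2]
    _ ≤ ‖A‖ * ‖x‖ + ε := by rw [← hy]; gcongr; exact A.le_opNorm y

theorem norm_ringInverse_le_of_pseudoergodicZ (hB : BiActs B bu bv bw)
    (hb : RangesIn U V W bu bv bw) (hBu : IsUnit B) (hA : BiActs A u v w)
    (hPE : PseudoergodicZ U V W u v w) (hAu : IsUnit A) :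
    ‖Ring.inverse B‖ ≤ ‖Ring.inverse A‖ := by
  set K := ‖Ring.inverse A‖
  have hK : 0 ≤ K := norm_nonneg _
  refine ContinuousLinearMap.norm_ringInverse_le_of_forall hBu hK
    (hB.norm_le_mul_norm_apply_of_forall_finite_support hK fun s x hx =>
      le_of_forall_pos_le_add fun γ hγ => ?_)
  obtain ⟨y, hy, hxy⟩ :=
    hPE.exists_norm_eq_abs_norm_apply_sub_lt hA hb hB hx (ε := γ / (K + 1)) (by positivity)
  have hKγ : K * (γ / (K + 1)) ≤ γ := by
    rw [mul_div_assoc', div_le_iff₀ (by positivity)]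
    nlinarith
  calc ‖x‖ = ‖y‖ := hy.symm
    _ ≤ K * ‖A y‖ := ContinuousLinearMap.norm_le_norm_ringInverse_mul hAu y
    _ ≤ K * (‖B x‖ + γ / (K + 1)) := by gcongr; linarith [(abs_sub_lt_iff.1 hxy).1]
    _ ≤ K * ‖B x‖ + γ := by rw [mul_add]; gcongr

end BiActs

theorem statement8_general (U V W : Set ℂ)
    (p : ℝ≥0∞) [Fact (1 ≤ p)]
    (A : SeqZ p →L[ℂ] SeqZ p) (hA : MemPE U V W A) :
    (IsGreatest {x : ℝ | ∃ B : SeqZ p →L[ℂ] SeqZ p, MemM U V W B ∧ x = ‖B‖} ‖A‖ ∧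
      ‖A‖ = Mnorm U V W p) ∧
    (Compatible U V W →
      IsGreatest {x : ℝ | ∃ B : SeqZ p →L[ℂ] SeqZ p, MemM U V W B ∧ x = ‖Ring.inverse B‖}
        ‖Ring.inverse A‖ ∧
      ‖Ring.inverse A‖ = Nnorm U V W p) := by
  obtain ⟨u, v, w, hr, hPE, hAacts⟩ := hA
  have hAM : MemM U V W A := ⟨u, v, w, hr, hAacts⟩
  have hnorm : IsGreatest {x : ℝ | ∃ B : SeqZ p →L[ℂ] SeqZ p, MemM U V W B ∧ x = ‖B‖} ‖A‖ := by
    refine ⟨⟨A, hAM, rfl⟩, ?_⟩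
    rintro _ ⟨B, ⟨bu, bv, bw, hb, hB⟩, rfl⟩
    exact hB.norm_le_of_pseudoergodicZ hb hAacts hPE
  refine ⟨⟨hnorm, hnorm.csSup_eq.symm⟩, fun hcomp => ?_⟩
  have hinv : IsGreatest
      {x : ℝ | ∃ B : SeqZ p →L[ℂ] SeqZ p, MemM U V W B ∧ x = ‖Ring.inverse B‖}
      ‖Ring.inverse A‖ := by
    refine ⟨⟨A, hAM, rfl⟩, ?_⟩
    rintro _ ⟨B, hBM, rfl⟩
    have hBu := hcomp p B hBM
    obtain ⟨bu, bv, bw, hb, hB⟩ := hBM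
    exact hB.norm_ringInverse_le_of_pseudoergodicZ hb hBu hAacts hPE (hcomp p A hAM)
  exact ⟨hinv, hinv.csSup_eq.symm⟩

/-- For `A ∈ PE(U,V,W)`: `‖A‖_p = max_{B ∈ M(U,V,W)} ‖B‖_p = M_p`
(the maximum being attained), and if `(U,V,W)` is compatible also
`‖A⁻¹‖_p = max_{B ∈ M(U,V,W)} ‖B⁻¹‖_p = N_p`. -/
theorem statement8 (U V W : Set ℂ)
    (hUne : U.Nonempty) (hUc : IsCompact U) (hVne : V.Nonempty) (hVc : IsCompact V)
    (hWne : W.Nonempty) (hWc : IsCompact W)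
    (p : ℝ≥0∞) [Fact (1 ≤ p)]
    (A : SeqZ p →L[ℂ] SeqZ p) (hA : MemPE U V W A) :
    (IsGreatest {x : ℝ | ∃ B : SeqZ p →L[ℂ] SeqZ p, MemM U V W B ∧ x = ‖B‖} ‖A‖ ∧
      ‖A‖ = Mnorm U V W p) ∧
    (Compatible U V W →
      IsGreatest {x : ℝ | ∃ B : SeqZ p →L[ℂ] SeqZ p, MemM U V W B ∧ x = ‖Ring.inverse B‖}
        ‖Ring.inverse A‖ ∧
      ‖Ring.inverse A‖ = Nnorm U V W p) :=
  statement8_general U V W p A hA
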